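/- (Multi-letter secrecy converse inequality for Class III; key step in the proof of Theorem 7.) Let N be a positive integer and ε ≥ 0. Let M1, W_1,…,W_N, Y_{1,1},…,Y_{1,N}, Y_{2,1},…,Y_{2,N} be random variables with values in finite sets such that (i) H(M1 | Y_{1,1},…,Y_{1,N}) ≤ N ε (Fano-type condition) and (ii) H(M1) − H(M1 | Y_{2,1},…,Y_{2,N}) ≤ N ε (confidentiality condition, i.e. I(M1; Y_2^N) ≤ N ε). For each n define the auxiliary random variable U_n = (Y_{1,n+1}^N, Y_2^{n−1}), where Y_{1,n+1}^N = (Y_{1,n+1},…,Y_{1,N}) and Y_2^{n−1} = (Y_{2,1},…,Y_{2,n−1}). Then H(M1) ≤ Σ_{n=1}^N [ I(M1; Y_{1,n} | U_n) + H(W_n | U_n, M1) − I(M1; Y_{2,n} | U_n) ] + 2 N ε. -/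
import Mathlib


open scoped Classical BigOperators
open Real

noncomputable section

/-- `p` is a probability mass function on a finite type. -/
def IsPMF {α : Type*} [Fintype α] (p : α → ℝ) : Prop :=
  (∀ a, 0 ≤ p a) ∧ ∑ a, p a = 1

/-- Base-2 Shannon entropy of a pmf on a finite type. -/
def entPMF {α : Type*} [Fintype α] (p : α → ℝ) : ℝ :=
  ∑ a, -(p a * Real.logb 2 (p a))

/-- Distribution (pushforward pmf) of a random variable `X` under the pmf `p`. -/
def distRV {Ω α : Type*} [Fintype Ω] (p : Ω → ℝ) (X : Ω → α) : α → ℝ :=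
  fun a => ∑ ω, if X ω = a then p ω else 0

/-- Shannon entropy `H(X)` of a random variable (base 2). -/
def entRV {Ω α : Type*} [Fintype Ω] [Fintype α] (p : Ω → ℝ) (X : Ω → α) : ℝ :=
  entPMF (distRV p X)

/-- Conditional entropy `H(X|Y)` (base 2). -/
def condEnt {Ω α β : Type*} [Fintype Ω] [Fintype α] [Fintype β]
    (p : Ω → ℝ) (X : Ω → α) (Y : Ω → β) : ℝ :=
  entRV p (fun ω => (X ω, Y ω)) - entRV p Y

/-- Mutual information `I(X;Y)` (base 2). -/
def mutInfo {Ω α β : Type*} [Fintype Ω] [Fintype α] [Fintype β]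
    (p : Ω → ℝ) (X : Ω → α) (Y : Ω → β) : ℝ :=
  entRV p X + entRV p Y - entRV p (fun ω => (X ω, Y ω))

/-- Conditional mutual information `I(X;Y|Z)` (base 2). -/
def condMutInfo {Ω α β γ : Type*} [Fintype Ω] [Fintype α] [Fintype β] [Fintype γ]
    (p : Ω → ℝ) (X : Ω → α) (Y : Ω → β) (Z : Ω → γ) : ℝ :=
  entRV p (fun ω => (X ω, Z ω)) + entRV p (fun ω => (Y ω, Z ω))
    - entRV p (fun ω => (X ω, Y ω, Z ω)) - entRV p Z

/-- The auxiliary random variable `U_n = (Y_{1,n+1}^N, Y_2^{n-1})`. -/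
def auxU11 {Ω 𝒴1 𝒴2 : Type} {N : ℕ} (Y1 : Fin N → Ω → 𝒴1) (Y2 : Fin N → Ω → 𝒴2)
    (n : Fin N) (ω : Ω) :
    ({k : Fin N // n < k} → 𝒴1) × ({k : Fin N // k < n} → 𝒴2) :=
  (fun k => Y1 k ω, fun k => Y2 k ω)

section AuxLemmas

variable {Ω α β : Type*} [Fintype Ω] [Fintype α] [Fintype β]

lemma distRV_nonneg' (p : Ω → ℝ) (hp : ∀ ω, 0 ≤ p ω) (X : Ω → α) (a : α) :
    0 ≤ distRV p X a := by
  refine Finset.sum_nonneg fun ω _ => ?_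
  split <;> simp [hp ω]

lemma entRV_congr' (p : Ω → ℝ) {X Y : Ω → α} (h : ∀ ω, X ω = Y ω) :
    entRV p X = entRV p Y := by
  rw [show X = Y from funext h]

lemma entRV_comp_inj' (p : Ω → ℝ) (X : Ω → α) (f : α → β) (hf : Function.Injective f) :
    entRV p (fun ω => f (X ω)) = entRV p X := by
  unfold entRV entPMF
  rw [← Finset.sum_subset (Finset.subset_univ (Finset.image f Finset.univ))]
  · rw [Finset.sum_image (fun a _ b _ h => hf h)]
    refine Finset.sum_congr rfl fun a _ => ?_
    have hd : distRV p (fun ω => f (X ω)) (f a) = distRV p X a := by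
      unfold distRV
      refine Finset.sum_congr rfl fun ω _ => ?_
      simp [hf.eq_iff]
    rw [hd]
  · intro b _ hb
    have hd : distRV p (fun ω => f (X ω)) b = 0 := by
      unfold distRV
      refine Finset.sum_eq_zero fun ω _ => ?_
      have : f (X ω) ≠ b := fun h => hb (Finset.mem_image.mpr ⟨X ω, Finset.mem_univ _, h⟩)
      simp [this]
    simp [hd]

lemma neg_sum_mul_logb_le' {α : Type*} [Fintype α] (q : α → ℝ) (hq : ∀ a, 0 ≤ q a) :
    -((∑ a, q a) * Real.logb 2 (∑ a, q a)) ≤ ∑ a, -(q a * Real.logb 2 (q a)) := by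
  have key : ∀ a : α, q a * Real.logb 2 (q a) ≤ q a * Real.logb 2 (∑ a', q a') := by
    intro a
    rcases eq_or_lt_of_le (hq a) with h | h
    · simp [← h]
    · refine mul_le_mul_of_nonneg_left ?_ (hq a)
      refine Real.logb_le_logb_of_le (by norm_num) h ?_
      exact Finset.single_le_sum (fun i _ => hq i) (Finset.mem_univ a)
  calc -((∑ a, q a) * Real.logb 2 (∑ a, q a))
      = ∑ a, -(q a * Real.logb 2 (∑ a', q a')) := by
        rw [Finset.sum_neg_distrib, ← Finset.sum_mul]
    _ ≤ ∑ a, -(q a * Real.logb 2 (q a)) := Finset.sum_le_sum fun a _ => neg_le_neg (key a)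

end AuxLemmas

section CondEnt

variable {Ω α β : Type*} [Fintype Ω] [Fintype α] [Fintype β]

lemma distRV_marginal' (p : Ω → ℝ) (X : Ω → α) (Y : Ω → β) (b : β) :
    distRV p Y b = ∑ a, distRV p (fun ω => (X ω, Y ω)) (a, b) := by
  unfold distRV
  rw [Finset.sum_comm]
  refine Finset.sum_congr rfl fun ω _ => ?_
  by_cases h : Y ω = b <;> simp [Prod.ext_iff, h]

lemma condEnt_nonneg' (p : Ω → ℝ) (hp : ∀ ω, 0 ≤ p ω) (X : Ω → α) (Y : Ω → β) :
    0 ≤ condEnt p X Y := by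
  unfold condEnt
  rw [sub_nonneg]
  unfold entRV entPMF
  calc ∑ b, -(distRV p Y b * Real.logb 2 (distRV p Y b))
      = ∑ b, -((∑ a, distRV p (fun ω => (X ω, Y ω)) (a, b)) *
          Real.logb 2 (∑ a, distRV p (fun ω => (X ω, Y ω)) (a, b))) := by
        refine Finset.sum_congr rfl fun b _ => ?_
        rw [distRV_marginal' p X Y b]
    _ ≤ ∑ b, ∑ a, -(distRV p (fun ω => (X ω, Y ω)) (a, b) *
          Real.logb 2 (distRV p (fun ω => (X ω, Y ω)) (a, b))) := by
        refine Finset.sum_le_sum fun b _ => ?_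
        exact neg_sum_mul_logb_le' _ fun a => distRV_nonneg' p hp _ _
    _ = ∑ c : α × β, -(distRV p (fun ω => (X ω, Y ω)) c *
          Real.logb 2 (distRV p (fun ω => (X ω, Y ω)) c)) := by
        rw [Fintype.sum_prod_type, Finset.sum_comm]

end CondEnt

section Encoders

variable {Ω 𝒴1 𝒴2 : Type} {N : ℕ}

/-- Censored vector: `Y1` on coordinates `≥ m`, `Y2` on coordinates `< m`. -/
def censorV (Y1 : Fin N → Ω → 𝒴1) (Y2 : Fin N → Ω → 𝒴2) (m : ℕ) (ω : Ω) :
    (Fin N → Option 𝒴1) × (Fin N → Option 𝒴2) :=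
  (fun k => if m ≤ (k : ℕ) then some (Y1 k ω) else none,
   fun k => if (k : ℕ) < m then some (Y2 k ω) else none)

def encA (n : Fin N)
    (x : 𝒴1 × (({k : Fin N // n < k} → 𝒴1) × ({k : Fin N // k < n} → 𝒴2))) :
    (Fin N → Option 𝒴1) × (Fin N → Option 𝒴2) :=
  (fun k => if h : n < k then some (x.2.1 ⟨k, h⟩) else if k = n then some x.1 else none,
   fun k => if h : k < n then some (x.2.2 ⟨k, h⟩) else none)

def encB (n : Fin N)
    (x : 𝒴2 × (({k : Fin N // n < k} → 𝒴1) × ({k : Fin N // k < n} → 𝒴2))) :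
    (Fin N → Option 𝒴1) × (Fin N → Option 𝒴2) :=
  (fun k => if h : n < k then some (x.2.1 ⟨k, h⟩) else none,
   fun k => if h : k < n then some (x.2.2 ⟨k, h⟩) else if k = n then some x.1 else none)

def encZero (𝒴2 : Type) (y : Fin N → 𝒴1) : (Fin N → Option 𝒴1) × (Fin N → Option 𝒴2) :=
  (fun k => some (y k), fun _ => none)

def encTop (𝒴1 : Type) (y : Fin N → 𝒴2) : (Fin N → Option 𝒴1) × (Fin N → Option 𝒴2) :=
  (fun _ => none, fun k => some (y k))

lemma encA_inj (n : Fin N) : Function.Injective (encA (𝒴1 := 𝒴1) (𝒴2 := 𝒴2) n) := by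
  rintro ⟨a, b, c⟩ ⟨a', b', c'⟩ h
  simp only [encA, Prod.mk.injEq] at h
  obtain ⟨h1, h2⟩ := h
  have ha : a = a' := by
    have := congrFun h1 n
    simp only [lt_irrefl, dif_neg, if_pos rfl, not_false_iff] at this
    exact Option.some.inj this
  have hb : b = b' := by
    funext k
    have := congrFun h1 k.1
    rw [dif_pos k.2, dif_pos k.2] at this
    exact Option.some.inj this
  have hc : c = c' := by
    funext k
    have := congrFun h2 k.1
    rw [dif_pos k.2, dif_pos k.2] at this
    exact Option.some.inj this
  simp [ha, hb, hc]

lemma encB_inj (n : Fin N) : Function.Injective (encB (𝒴1 := 𝒴1) (𝒴2 := 𝒴2) n) := by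
  rintro ⟨a, b, c⟩ ⟨a', b', c'⟩ h
  simp only [encB, Prod.mk.injEq] at h
  obtain ⟨h1, h2⟩ := h
  have ha : a = a' := by
    have := congrFun h2 n
    simp only [lt_irrefl, dif_neg, if_pos rfl, not_false_iff] at this
    exact Option.some.inj this
  have hb : b = b' := by
    funext k
    have := congrFun h1 k.1
    rw [dif_pos k.2, dif_pos k.2] at this
    exact Option.some.inj this
  have hc : c = c' := by
    funext k
    have := congrFun h2 k.1
    rw [dif_pos k.2, dif_pos k.2] at this
    exact Option.some.inj this
  simp [ha, hb, hc]

lemma encZero_inj : Function.Injective (encZero (N := N) (𝒴1 := 𝒴1) 𝒴2) := by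
  intro y y' h
  simp only [encZero, Prod.mk.injEq] at h
  funext k
  exact Option.some.inj (congrFun h.1 k)

lemma encTop_inj : Function.Injective (encTop (N := N) (𝒴2 := 𝒴2) 𝒴1) := by
  intro y y' h
  simp only [encTop, Prod.mk.injEq] at h
  funext k
  exact Option.some.inj (congrFun h.2 k)

lemma censorV_eq_encA (Y1 : Fin N → Ω → 𝒴1) (Y2 : Fin N → Ω → 𝒴2) (n : Fin N) (ω : Ω) :
    censorV Y1 Y2 (n : ℕ) ω = encA n (Y1 n ω, auxU11 Y1 Y2 n ω) := by
  unfold censorV encA auxU11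
  simp only [Prod.mk.injEq]
  constructor
  · funext k
    by_cases h1 : n < k
    · rw [dif_pos h1, if_pos (le_of_lt (Fin.lt_def.mp h1))]
    · rw [dif_neg h1]
      by_cases h2 : k = n
      · subst h2
        rw [if_pos rfl, if_pos le_rfl]
      · rw [if_neg h2, if_neg ?_]
        have hk : (k : ℕ) ≤ (n : ℕ) := Fin.le_def.mp (not_lt.mp h1)
        have hne : (k : ℕ) ≠ (n : ℕ) := fun hh => h2 (Fin.ext hh)
        omega
  · funext k
    by_cases h : k < n
    · rw [dif_pos h, if_pos (Fin.lt_def.mp h)]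
    · rw [dif_neg h, if_neg (fun hh => h (Fin.lt_def.mpr hh))]

lemma censorV_eq_encB (Y1 : Fin N → Ω → 𝒴1) (Y2 : Fin N → Ω → 𝒴2) (n : Fin N) (ω : Ω) :
    censorV Y1 Y2 ((n : ℕ) + 1) ω = encB n (Y2 n ω, auxU11 Y1 Y2 n ω) := by
  unfold censorV encB auxU11
  simp only [Prod.mk.injEq]
  constructor
  · funext k
    by_cases h1 : n < k
    · rw [dif_pos h1, if_pos (by exact Fin.lt_def.mp h1)]
    · rw [dif_neg h1, if_neg ?_]
      have hk : (k : ℕ) ≤ (n : ℕ) := Fin.le_def.mp (not_lt.mp h1)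
      omega
  · funext k
    by_cases h1 : k < n
    · rw [dif_pos h1, if_pos (by have := Fin.lt_def.mp h1; omega)]
    · rw [dif_neg h1]
      by_cases h2 : k = n
      · subst h2
        rw [if_pos rfl, if_pos (by omega)]
      · rw [if_neg h2, if_neg ?_]
        have hk : (n : ℕ) ≤ (k : ℕ) := Fin.le_def.mp (not_lt.mp h1)
        have hne : (k : ℕ) ≠ (n : ℕ) := fun hh => h2 (Fin.ext hh)
        omega

lemma censorV_zero (Y1 : Fin N → Ω → 𝒴1) (Y2 : Fin N → Ω → 𝒴2) (ω : Ω) :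
    censorV Y1 Y2 0 ω = encZero 𝒴2 (fun k => Y1 k ω) := by
  unfold censorV encZero
  simp

lemma censorV_top (Y1 : Fin N → Ω → 𝒴1) (Y2 : Fin N → Ω → 𝒴2) (ω : Ω) :
    censorV Y1 Y2 N ω = encTop 𝒴1 (fun k => Y2 k ω) := by
  unfold censorV encTop
  simp only [Prod.mk.injEq]
  constructor
  · funext k
    rw [if_neg (by have := k.is_lt; omega)]
  · funext k
    rw [if_pos k.is_lt]

end Encoders

/-- **Multi-letter secrecy converse inequality for Class III (key step in the
proof of Theorem 7).** If `H(M1 | Y_1^N) ≤ N ε` (Fano) and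
`H(M1) − H(M1 | Y_2^N) ≤ N ε` (confidentiality), then with
`U_n = (Y_{1,n+1}^N, Y_2^{n-1})` one has
`H(M1) ≤ Σ_n [ I(M1;Y_{1,n}|U_n) + H(W_n|U_n,M1) − I(M1;Y_{2,n}|U_n) ] + 2Nε`. -/
theorem classIII_multiletter_secrecy_converse {Ω μ1 𝒲 𝒴1 𝒴2 : Type}
    [Fintype Ω] [Fintype μ1] [Fintype 𝒲] [Fintype 𝒴1] [Fintype 𝒴2]
    (p : Ω → ℝ) (hp : IsPMF p) (N : ℕ) (hN : 0 < N) (ε : ℝ) (hε : 0 ≤ ε)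
    (M1 : Ω → μ1) (W : Fin N → Ω → 𝒲)
    (Y1 : Fin N → Ω → 𝒴1) (Y2 : Fin N → Ω → 𝒴2)
    (hFano : condEnt p M1 (fun ω => fun n : Fin N => Y1 n ω) ≤ (N : ℝ) * ε)
    (hConf : entRV p M1 - condEnt p M1 (fun ω => fun n : Fin N => Y2 n ω)
      ≤ (N : ℝ) * ε) :
    entRV p M1 ≤
      (∑ n : Fin N,
        (condMutInfo p M1 (Y1 n) (auxU11 Y1 Y2 n)
          + condEnt p (W n) (fun ω => (auxU11 Y1 Y2 n ω, M1 ω))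
          - condMutInfo p M1 (Y2 n) (auxU11 Y1 Y2 n)))
      + 2 * (N : ℝ) * ε := by
  classical
  set F : ℕ → ℝ := fun m =>
    entRV p (censorV Y1 Y2 m) - entRV p (fun ω => (M1 ω, censorV Y1 Y2 m ω)) with hF
  -- per-step identity
  have hstep : ∀ n : Fin N,
      condMutInfo p M1 (Y1 n) (auxU11 Y1 Y2 n)
        - condMutInfo p M1 (Y2 n) (auxU11 Y1 Y2 n)
      = F (n : ℕ) - F ((n : ℕ) + 1) := by
    intro n
    have e1 : entRV p (censorV Y1 Y2 (n : ℕ))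
        = entRV p (fun ω => (Y1 n ω, auxU11 Y1 Y2 n ω)) := by
      rw [entRV_congr' p (fun ω => censorV_eq_encA Y1 Y2 n ω)]
      exact entRV_comp_inj' p _ _ (encA_inj n)
    have e1M : entRV p (fun ω => (M1 ω, censorV Y1 Y2 (n : ℕ) ω))
        = entRV p (fun ω => (M1 ω, Y1 n ω, auxU11 Y1 Y2 n ω)) := by
      rw [entRV_congr' p (fun ω => by rw [censorV_eq_encA Y1 Y2 n ω])]
      exact entRV_comp_inj' p (fun ω => (M1 ω, Y1 n ω, auxU11 Y1 Y2 n ω))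
        (Prod.map id (encA n)) (Function.injective_id.prodMap (encA_inj n))
    have e2 : entRV p (censorV Y1 Y2 ((n : ℕ) + 1))
        = entRV p (fun ω => (Y2 n ω, auxU11 Y1 Y2 n ω)) := by
      rw [entRV_congr' p (fun ω => censorV_eq_encB Y1 Y2 n ω)]
      exact entRV_comp_inj' p _ _ (encB_inj n)
    have e2M : entRV p (fun ω => (M1 ω, censorV Y1 Y2 ((n : ℕ) + 1) ω))
        = entRV p (fun ω => (M1 ω, Y2 n ω, auxU11 Y1 Y2 n ω)) := by
      rw [entRV_congr' p (fun ω => by rw [censorV_eq_encB Y1 Y2 n ω])]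
      exact entRV_comp_inj' p (fun ω => (M1 ω, Y2 n ω, auxU11 Y1 Y2 n ω))
        (Prod.map id (encB n)) (Function.injective_id.prodMap (encB_inj n))
    simp only [hF, condMutInfo]
    rw [e1, e1M, e2, e2M]
    ring
  -- telescoping
  have htel : ∑ n : Fin N,
      (condMutInfo p M1 (Y1 n) (auxU11 Y1 Y2 n)
        - condMutInfo p M1 (Y2 n) (auxU11 Y1 Y2 n)) = F 0 - F N := by
    calc ∑ n : Fin N, (condMutInfo p M1 (Y1 n) (auxU11 Y1 Y2 n)
          - condMutInfo p M1 (Y2 n) (auxU11 Y1 Y2 n))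
        = ∑ n : Fin N, (F (n : ℕ) - F ((n : ℕ) + 1)) :=
          Finset.sum_congr rfl fun n _ => hstep n
      _ = ∑ i ∈ Finset.range N, (F i - F (i + 1)) :=
          Fin.sum_univ_eq_sum_range (fun i => F i - F (i + 1)) N
      _ = F 0 - F N := Finset.sum_range_sub' F N
  -- endpoints
  have hF0 : F 0 = entRV p (fun ω => fun k : Fin N => Y1 k ω)
      - entRV p (fun ω => (M1 ω, fun k : Fin N => Y1 k ω)) := by
    have c0 : entRV p (censorV Y1 Y2 0)
        = entRV p (fun ω => fun k : Fin N => Y1 k ω) := by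
      rw [entRV_congr' p (fun ω => censorV_zero Y1 Y2 ω)]
      exact entRV_comp_inj' p _ _ encZero_inj
    have c0M : entRV p (fun ω => (M1 ω, censorV Y1 Y2 0 ω))
        = entRV p (fun ω => (M1 ω, fun k : Fin N => Y1 k ω)) := by
      rw [entRV_congr' p (fun ω => by rw [censorV_zero Y1 Y2 ω])]
      exact entRV_comp_inj' p (fun ω => (M1 ω, fun k : Fin N => Y1 k ω))
        (Prod.map id (encZero 𝒴2)) (Function.injective_id.prodMap encZero_inj)
    simp only [hF]
    rw [c0, c0M]
  have hFN : F N = entRV p (fun ω => fun k : Fin N => Y2 k ω)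
      - entRV p (fun ω => (M1 ω, fun k : Fin N => Y2 k ω)) := by
    have cN : entRV p (censorV Y1 Y2 N)
        = entRV p (fun ω => fun k : Fin N => Y2 k ω) := by
      rw [entRV_congr' p (fun ω => censorV_top Y1 Y2 ω)]
      exact entRV_comp_inj' p _ _ encTop_inj
    have cNM : entRV p (fun ω => (M1 ω, censorV Y1 Y2 (N : ℕ) ω))
        = entRV p (fun ω => (M1 ω, fun k : Fin N => Y2 k ω)) := by
      rw [entRV_congr' p (fun ω => by rw [censorV_top Y1 Y2 ω])]
      exact entRV_comp_inj' p (fun ω => (M1 ω, fun k : Fin N => Y2 k ω))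
        (Prod.map id (encTop 𝒴1)) (Function.injective_id.prodMap encTop_inj)
    simp only [hF]
    rw [cN, cNM]
  -- endpoint inequalities
  have h1 : -((N : ℝ) * ε) ≤ F 0 := by
    rw [hF0]
    unfold condEnt at hFano
    linarith
  have h2 : entRV p M1 + F N ≤ (N : ℝ) * ε := by
    rw [hFN]
    unfold condEnt at hConf
    linarith
  -- nonnegativity of the W-terms
  have hWsum : 0 ≤ ∑ n : Fin N,
      condEnt p (W n) (fun ω => (auxU11 Y1 Y2 n ω, M1 ω)) :=
    Finset.sum_nonneg fun n _ => condEnt_nonneg' p hp.1 _ _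
  -- split the sum
  have hsplit : ∑ n : Fin N,
      (condMutInfo p M1 (Y1 n) (auxU11 Y1 Y2 n)
        + condEnt p (W n) (fun ω => (auxU11 Y1 Y2 n ω, M1 ω))
        - condMutInfo p M1 (Y2 n) (auxU11 Y1 Y2 n))
      = ∑ n : Fin N, (condMutInfo p M1 (Y1 n) (auxU11 Y1 Y2 n)
          - condMutInfo p M1 (Y2 n) (auxU11 Y1 Y2 n))
        + ∑ n : Fin N, condEnt p (W n) (fun ω => (auxU11 Y1 Y2 n ω, M1 ω)) := by
    rw [← Finset.sum_add_distrib]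
    exact Finset.sum_congr rfl fun n _ => by ring
  rw [hsplit, htel]
  -- combine: F N is I(M1;Y2^N)-type; h2 says entRV p M1 - F N ≤ Nε... 
  linarith
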